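/- arXiv:2305.05130 — 2 statements merged into one kernel-verified Lean document; each statement's English description precedes it below -/
import Mathlib

section
/- Let a, b, c ∈ ℝ with ac > 0 and b² − 4ac > 0, and let {P_m(z)} be generated by 1/((at²+bt+c)(1−tz)). Then for every m ≥ 0, no zero of P_m(z) lies in the open ball {z : |z| < 1/|α|}, where α is the root of at²+bt+c of smallest modulus. -/
/-!
Write `x = 1/α` and `y = aα/c` for the reciprocals of the two roots, so that
`at² + bt + c = c (1 - xt)(1 - yt)` and `P_m(z) = c⁻¹ h_m(x, y, z)`, where `h_m` is the complete
homogeneous symmetric polynomial of degree `m`. The identity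
`(x - z) h_m(x, y, z) = h_{m+1}(x, y) - h_{m+1}(z, y)` does the rest: after a sign change
`x, y > 0`, and for `|z| < x` the triangle inequality gives
`|h_{m+1}(z, y)| ≤ h_{m+1}(|z|, y) < h_{m+1}(x, y)`, so the right-hand side cannot vanish.
-/

open Finset Filter Topology

section Algebra

variable {R : Type*}

section CommSemiring

variable [CommSemiring R]

/-- The coefficients of `(∑ f n tⁿ) / (1 - w t)`. -/
def geomConv (f : ℕ → R) (w : R) (n : ℕ) : R :=
  ∑ p ∈ antidiagonal n, f p.1 * w ^ p.2

lemma geomConv_zero (f : ℕ → R) (w : R) : geomConv f w 0 = f 0 := by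
  simp [geomConv]

lemma geomConv_succ (f : ℕ → R) (w : R) (n : ℕ) :
    geomConv f w (n + 1) = w * geomConv f w n + f (n + 1) := by
  rw [geomConv, Nat.sum_antidiagonal_succ', geomConv, mul_sum, add_comm, pow_zero, mul_one]
  exact congrArg (· + _) (sum_congr rfl fun p _ => by ring)

lemma geomConv_pow_mul (s : R) (f : ℕ → R) (w : R) (n : ℕ) :
    geomConv (fun k => s ^ k * f k) (s * w) n = s ^ n * geomConv f w n := by
  rw [geomConv, geomConv, mul_sum]
  refine sum_congr rfl fun p hp => ?_
  rw [← mem_antidiagonal.mp hp, pow_add]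
  ring

lemma geomConv_mul_pow (f : ℕ → R) (w t : R) (n : ℕ) :
    geomConv f w n * t ^ n = ∑ p ∈ antidiagonal n, f p.1 * t ^ p.1 * (w * t) ^ p.2 := by
  rw [geomConv, sum_mul]
  refine sum_congr rfl fun p hp => ?_
  rw [← mem_antidiagonal.mp hp, pow_add]
  ring

def completeHom₂ (u v : R) : ℕ → R :=
  geomConv (u ^ ·) v

def completeHom₃ (x y z : R) : ℕ → R :=
  geomConv (completeHom₂ x y) z

lemma completeHom₂_zero (u v : R) : completeHom₂ u v 0 = 1 := by
  simp [completeHom₂, geomConv_zero]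

lemma completeHom₂_succ (u v : R) (n : ℕ) :
    completeHom₂ u v (n + 1) = u * completeHom₂ u v n + v ^ (n + 1) := by
  rw [completeHom₂, geomConv, Nat.sum_antidiagonal_succ, geomConv, mul_sum, add_comm,
    pow_zero, one_mul]
  exact congrArg (· + _) (sum_congr rfl fun p _ => by ring)

lemma completeHom₃_mul (s x y z : R) (m : ℕ) :
    completeHom₃ (s * x) (s * y) (s * z) m = s ^ m * completeHom₃ x y z m := by
  have h₂ : completeHom₂ (s * x) (s * y) = fun k => s ^ k * completeHom₂ x y k :=
    funext fun k => by simpa only [completeHom₂, mul_pow] using geomConv_pow_mul s (x ^ ·) y k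
  rw [completeHom₃, h₂, geomConv_pow_mul, completeHom₃]

end CommSemiring

lemma sub_mul_completeHom₃ [CommRing R] (x y z : R) (m : ℕ) :
    (x - z) * completeHom₃ x y z m = completeHom₂ x y (m + 1) - completeHom₂ z y (m + 1) := by
  induction m with
  | zero =>
    simp only [completeHom₃, geomConv_zero, completeHom₂_succ, completeHom₂_zero]
    ring
  | succ m ih =>
    rw [completeHom₃, geomConv_succ, ← completeHom₃, completeHom₂_succ x y (m + 1),
      completeHom₂_succ z y (m + 1)]
    linear_combination z * ih

lemma quadratic_eq_mul_reciprocal_roots [Field R] {a b c α : R} (hc : c ≠ 0) (hα₀ : α ≠ 0)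
    (hα : a * α ^ 2 + b * α + c = 0) (t : R) :
    a * t ^ 2 + b * t + c = c * ((1 - α⁻¹ * t) * (1 - a * α / c * t)) := by
  field_simp
  linear_combination t * hα

end Algebra

section Analytic

variable {𝕜 : Type*}

section Cauchy

variable [NormedField 𝕜] {f : ℕ → 𝕜} {w t : 𝕜}

lemma norm_completeHom₂_le (u v : 𝕜) (n : ℕ) :
    ‖completeHom₂ u v n‖ ≤ completeHom₂ ‖u‖ ‖v‖ n := by
  unfold completeHom₂ geomConv
  exact (norm_sum_le _ _).trans_eq (sum_congr rfl fun p _ => by rw [norm_mul, norm_pow, norm_pow])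

lemma summable_norm_geomConv_mul_pow (hf : Summable fun n => ‖f n * t ^ n‖) (hw : ‖w * t‖ < 1) :
    Summable fun n => ‖geomConv f w n * t ^ n‖ := by
  have hg : Summable fun n => ‖(w * t) ^ n‖ := by
    simpa only [norm_pow] using summable_geometric_of_lt_one (norm_nonneg _) hw
  simpa only [geomConv_mul_pow] using
    summable_norm_sum_mul_antidiagonal_of_summable_norm (g := fun n => (w * t) ^ n) hf hg

variable [CompleteSpace 𝕜]

lemma hasSum_geomConv_mul_pow {A : 𝕜} (hf : HasSum (fun n => f n * t ^ n) A)
    (hf' : Summable fun n => ‖f n * t ^ n‖) (hw : ‖w * t‖ < 1) :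
    HasSum (fun n => geomConv f w n * t ^ n) (A * (1 - w * t)⁻¹) := by
  have hg' : Summable fun n => ‖(w * t) ^ n‖ := by
    simpa only [norm_pow] using summable_geometric_of_lt_one (norm_nonneg _) hw
  have hprod := (summable_norm_sum_mul_antidiagonal_of_summable_norm
    (g := fun n => (w * t) ^ n) hf' hg').of_norm.hasSum
  rw [← tsum_mul_tsum_eq_tsum_sum_antidiagonal_of_summable_norm hf' hg', hf.tsum_eq,
    (hasSum_geometric_of_norm_lt_one hw).tsum_eq] at hprod
  simpa only [geomConv_mul_pow] using hprod

lemma eventually_hasSum_completeHom₃ (x y z : 𝕜) :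
    ∀ᶠ t in 𝓝 0, HasSum (fun m => completeHom₃ x y z m * t ^ m)
      ((1 - x * t)⁻¹ * (1 - y * t)⁻¹ * (1 - z * t)⁻¹) := by
  have small (u : 𝕜) : ∀ᶠ t in 𝓝 0, ‖u * t‖ < 1 :=
    ((continuous_const_mul u).norm.tendsto' 0 0 (by simp)).eventually_lt_const zero_lt_one
  filter_upwards [small x, small y, small z] with t hx hy hz
  have hgeom : HasSum (fun n => x ^ n * t ^ n) (1 - x * t)⁻¹ := by
    simpa only [mul_pow] using hasSum_geometric_of_norm_lt_one hx
  have hgeom' : Summable fun n => ‖x ^ n * t ^ n‖ := by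
    simpa only [← mul_pow, norm_pow] using summable_geometric_of_lt_one (norm_nonneg _) hx
  exact hasSum_geomConv_mul_pow (hasSum_geomConv_mul_pow hgeom hgeom' hy)
    (summable_norm_geomConv_mul_pow hgeom' hy) hz

end Cauchy

section Uniqueness

variable [NontriviallyNormedField 𝕜]

open FormalMultilinearSeries in
lemma hasFPowerSeriesAt_ofScalars_of_eventually_hasSum {c : ℕ → 𝕜} {F : 𝕜 → 𝕜}
    (h : ∀ᶠ t in 𝓝 0, HasSum (fun n => c n * t ^ n) (F t)) :
    HasFPowerSeriesAt F (ofScalars 𝕜 c) 0 := by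
  obtain ⟨r, hr, hball⟩ := Metric.eventually_nhds_iff_ball.mp h
  obtain ⟨t₀, ht₀, ht₀r⟩ := NormedField.exists_norm_lt 𝕜 hr
  refine ⟨‖t₀‖₊, ?_, by simpa using ht₀, fun {y} hy => ?_⟩
  · refine le_radius_of_tendsto _ (l := 0) ?_
    simpa [ofScalars_norm, norm_mul, norm_pow] using
      (hball t₀ (by simpa using ht₀r)).summable.tendsto_atTop_zero.norm
  · simp only [zero_add, ofScalars_apply_eq, smul_eq_mul]
    refine hball y (mem_ball_zero_iff.mpr (lt_trans ?_ ht₀r))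
    simpa using hy

lemma eq_of_eventually_hasSum_mul_pow {c d : ℕ → 𝕜} {F : 𝕜 → 𝕜}
    (hc : ∀ᶠ t in 𝓝 0, HasSum (fun n => c n * t ^ n) (F t))
    (hd : ∀ᶠ t in 𝓝 0, HasSum (fun n => d n * t ^ n) (F t)) : c = d :=
  FormalMultilinearSeries.ofScalars_series_injective 𝕜 𝕜
    ((hasFPowerSeriesAt_ofScalars_of_eventually_hasSum hc).eq_formalMultilinearSeries
      (hasFPowerSeriesAt_ofScalars_of_eventually_hasSum hd))

lemma eq_completeHom₃_of_eventually_hasSum [CompleteSpace 𝕜] {p : ℕ → 𝕜} {c x y z : 𝕜}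
    (h : ∀ᶠ t in 𝓝 0,
      HasSum (fun n => p n * t ^ n) ((c * ((1 - x * t) * (1 - y * t)) * (1 - t * z))⁻¹)) :
    p = fun n => c⁻¹ * completeHom₃ x y z n := by
  refine eq_of_eventually_hasSum_mul_pow h ((eventually_hasSum_completeHom₃ x y z).mono
    fun t ht => ?_)
  have hval : (c * ((1 - x * t) * (1 - y * t)) * (1 - t * z))⁻¹
      = c⁻¹ * ((1 - x * t)⁻¹ * (1 - y * t)⁻¹ * (1 - z * t)⁻¹) := by
    rw [mul_comm t z]
    simp only [mul_inv]
    ring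
  rw [hval]
  simpa only [mul_assoc] using ht.mul_left c⁻¹

end Uniqueness

end Analytic

lemma completeHom₂_lt_completeHom₂ {a b v : ℝ} (ha : 0 ≤ a) (hab : a < b) (hv : 0 ≤ v) (n : ℕ) :
    completeHom₂ a v (n + 1) < completeHom₂ b v (n + 1) := by
  unfold completeHom₂ geomConv
  refine sum_lt_sum (fun p _ => by dsimp only; gcongr) ⟨(n + 1, 0), by simp, ?_⟩
  simpa using pow_lt_pow_left₀ hab ha n.succ_ne_zero

lemma completeHom₃_ne_zero {x y : ℝ} {z : ℂ} (hy : 0 ≤ y) (hz : ‖z‖ < x) (m : ℕ) :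
    completeHom₃ (x : ℂ) y z m ≠ 0 := by
  intro h
  have key := sub_mul_completeHom₃ (x : ℂ) y z m
  rw [h, mul_zero, eq_comm, sub_eq_zero] at key
  have hcast : completeHom₂ (x : ℂ) y (m + 1) = (completeHom₂ x y (m + 1) : ℝ) := by
    simp [completeHom₂, geomConv]
  have hlt : completeHom₂ x y (m + 1) < completeHom₂ x y (m + 1) := calc
    _ ≤ ‖completeHom₂ (x : ℂ) y (m + 1)‖ := by
      rw [hcast, Complex.norm_real]
      exact Real.le_norm_self _
    _ = ‖completeHom₂ z y (m + 1)‖ := by rw [key]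
    _ ≤ completeHom₂ ‖z‖ ‖(y : ℂ)‖ (m + 1) := norm_completeHom₂_le _ _ _
    _ < completeHom₂ x y (m + 1) := by
      rw [Complex.norm_of_nonneg hy]
      exact completeHom₂_lt_completeHom₂ (norm_nonneg z) hz hy m
  exact lt_irrefl _ hlt

lemma completeHom₃_ne_zero_of_mul_pos {x y : ℝ} {z : ℂ} (hxy : 0 < x * y) (hz : ‖z‖ < |x|)
    (m : ℕ) : completeHom₃ (x : ℂ) y z m ≠ 0 := by
  rcases lt_or_gt_of_ne (left_ne_zero_of_mul hxy.ne') with hx | hx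
  · have hy : y < 0 := neg_of_mul_pos_right hxy hx.le
    have hneg := completeHom₃_mul (-1) (x : ℂ) y z m
    simp only [neg_one_mul] at hneg
    have := completeHom₃_ne_zero (x := -x) (y := -y) (z := -z) (by linarith)
      (by rwa [norm_neg, ← abs_of_neg hx]) m
    push_cast at this
    rw [hneg] at this
    exact right_ne_zero_of_mul this
  · have hy : 0 < y := pos_of_mul_pos_right hxy hx.le
    exact completeHom₃_ne_zero hy.le (by rwa [abs_of_pos hx] at hz) m

theorem stmt_15_general (a b c : ℝ) (hac : 0 < a * c)
    (α : ℝ) (hα : a * α ^ 2 + b * α + c = 0)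
    (P : ℕ → ℂ → ℂ)
    (hP : ∀ z : ℂ, ∃ ε > 0, ∀ t : ℂ, ‖t‖ < ε →
      HasSum (fun m => P m z * t ^ m)
        ((((a : ℂ) * t ^ 2 + (b : ℂ) * t + (c : ℂ)) * (1 - t * z))⁻¹)) :
    ∀ m : ℕ, ∀ z : ℂ, P m z = 0 → 1 / |α| ≤ ‖z‖ := by
  intro m z hPz
  by_contra! hz
  have hc : c ≠ 0 := right_ne_zero_of_mul hac.ne'
  have hα₀ : α ≠ 0 := by
    rintro rfl
    exact hc (by simpa using hα)
  set x := α⁻¹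
  set y := a * α / c
  have hfactor (t : ℂ) : (a : ℂ) * t ^ 2 + b * t + c = c * ((1 - x * t) * (1 - y * t)) := by
    simp only [x, y]
    push_cast
    exact quadratic_eq_mul_reciprocal_roots (by exact_mod_cast hc) (by exact_mod_cast hα₀)
      (by exact_mod_cast hα) t
  have hcoeff : (fun n => P n z) = fun n => (c : ℂ)⁻¹ * completeHom₃ (x : ℂ) y z n := by
    obtain ⟨ε, hε, hsum⟩ := hP z
    refine eq_completeHom₃_of_eventually_hasSum (Metric.eventually_nhds_iff.mpr ⟨ε, hε, ?_⟩)
    intro t ht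
    simpa only [hfactor] using hsum t (by simpa using ht)
  have hxy : 0 < x * y := by
    have : x * y = a * c / c ^ 2 := by
      simp only [x, y]
      field_simp
    exact this ▸ div_pos hac (by positivity)
  have hzx : ‖z‖ < |x| := by rwa [abs_inv, ← one_div]
  refine completeHom₃_ne_zero_of_mul_pos hxy hzx m ?_
  simpa [hPz, hc] using (congrFun hcoeff m).symm

/-- If `ac > 0`, `b² - 4ac > 0`, `{P_m}` is generated by `1/((at²+bt+c)(1-tz))`,
and `α` is the root of `at²+bt+c` of smallest modulus, then no zero of `P_m`
lies in the open ball of radius `1/|α|`. -/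
theorem stmt_15 (a b c : ℝ) (hac : 0 < a * c) (hd : 0 < b ^ 2 - 4 * a * c)
    (α : ℝ) (hα : a * α ^ 2 + b * α + c = 0)
    (hmin : ∀ β : ℝ, a * β ^ 2 + b * β + c = 0 → |α| ≤ |β|)
    (P : ℕ → ℂ → ℂ)
    (hP : ∀ z : ℂ, ∃ ε > 0, ∀ t : ℂ, ‖t‖ < ε →
      HasSum (fun m => P m z * t ^ m)
        ((((a : ℂ) * t ^ 2 + (b : ℂ) * t + (c : ℂ)) * (1 - t * z))⁻¹)) :
    ∀ m : ℕ, ∀ z : ℂ, P m z = 0 → 1 / |α| ≤ ‖z‖ :=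
  stmt_15_general a b c hac α hα P hP
end

section
/- Let a, b, c ∈ ℝ\{0} with ac > 0 and b² − 4ac > 0, and let {P_m(z)} be generated by 1/((at²+bt+c)(1−tz)). Then for every m ≥ 0, no zero of P_m(z) lies in the closed disk {z : |z| ≤ 1/|α|}, where α is the root of at²+bt+c of smaller modulus. -/
/-!
Factor `at² + bt + c = c (1 - ut)(1 - vt)` with `u = 1/α`; since `ac > 0`, `u` and `v` have the
same sign, and up to the sign `(-1)^m` we may take `u, v > 0`. Then `c P_m(z)` is the complete
homogeneous polynomial `h_m(u, v, z)`, and `(z - u) h_m(u, v, z) = G(z) - G(u)` for the polynomial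
`G(x) = ∑_{j ≤ m} vʲ x^(m-j+1)` with positive coefficients and a linear term. For `|z| ≤ u`,
comparing real parts, `G(z) = G(u)` forces `Re z = u`, i.e. `z = u`; but `h_m(u, v, u) > 0`.
This is the Eneström–Kakeya argument for the polynomial `h_m(u, v, u w)`.
-/

open Finset Filter Topology

section Algebra

variable {R : Type*}

def hsymm2 [CommSemiring R] (x y : R) (n : ℕ) : R := ∑ k ∈ range (n + 1), x ^ k * y ^ (n - k)

/-- The complete homogeneous symmetric polynomial `∑_{i+j+k=m} uⁱ vʲ zᵏ`, i.e. the coefficient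
of `tᵐ` in `1/((1 - ut)(1 - vt)(1 - zt))`. -/
def hsymm3 [CommSemiring R] (u v z : R) (m : ℕ) : R :=
  ∑ j ∈ range (m + 1), v ^ j * hsymm2 z u (m - j)

lemma sub_mul_hsymm2 [CommRing R] (x y : R) (n : ℕ) :
    (x - y) * hsymm2 x y n = x ^ (n + 1) - y ^ (n + 1) := by
  rw [mul_comm, ← geom_sum₂_mul, hsymm2]
  simp

lemma sub_mul_hsymm3 [CommRing R] (u v z : R) (m : ℕ) :
    (z - u) * hsymm3 u v z m =
      ∑ j ∈ range (m + 1), v ^ j * z ^ (m - j + 1) -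
        ∑ j ∈ range (m + 1), v ^ j * u ^ (m - j + 1) := by
  simp_rw [hsymm3, mul_sum, ← sum_sub_distrib, mul_left_comm (z - u), sub_mul_hsymm2, mul_sub]

lemma hsymm2_mul_mul [CommSemiring R] (s x y : R) (n : ℕ) :
    hsymm2 (s * x) (s * y) n = s ^ n * hsymm2 x y n := by
  rw [hsymm2, hsymm2, mul_sum]
  refine sum_congr rfl fun k hk => ?_
  rw [mul_pow, mul_pow, ← pow_mul_pow_sub s (Nat.le_of_lt_succ (mem_range.1 hk))]
  ring

lemma hsymm3_mul_mul_mul [CommSemiring R] (s u v z : R) (m : ℕ) :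
    hsymm3 (s * u) (s * v) (s * z) m = s ^ m * hsymm3 u v z m := by
  rw [hsymm3, hsymm3, mul_sum]
  refine sum_congr rfl fun j hj => ?_
  rw [hsymm2_mul_mul, mul_pow, ← pow_mul_pow_sub s (Nat.le_of_lt_succ (mem_range.1 hj))]
  ring

end Algebra

lemma hsymm3_pos {u v z : ℝ} (hu : 0 < u) (hv : 0 < v) (hz : 0 < z) (m : ℕ) :
    0 < hsymm3 u v z m :=
  sum_pos (fun _ _ => mul_pos (by positivity)
    (sum_pos (fun _ _ => by positivity) nonempty_range_add_one)) nonempty_range_add_one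

lemma quadratic_eq_mul_one_sub_mul_one_sub {K : Type*} [Field K] {a b c α : K} (hc : c ≠ 0)
    (hα0 : α ≠ 0) (hα : a * α ^ 2 + b * α + c = 0) (t : K) :
    a * t ^ 2 + b * t + c = c * ((1 - α⁻¹ * t) * (1 - a * α / c * t)) := by
  have hb : b = -(a * α + c / α) := by
    field_simp
    linear_combination hα
  subst hb
  field_simp
  ring

lemma eq_of_sum_mul_pow_eq {ι : Type*} {s : Finset ι} {c : ι → ℝ} {e : ι → ℕ} {i₀ : ι}
    (hc : ∀ i ∈ s, 0 ≤ c i) (hi₀ : i₀ ∈ s) (hc₀ : 0 < c i₀) (he₀ : e i₀ = 1) {z : ℂ} {r : ℝ}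
    (hz : ‖z‖ ≤ r) (h : ∑ i ∈ s, (c i : ℂ) * z ^ e i = ∑ i ∈ s, (c i : ℂ) * (r : ℂ) ^ e i) :
    z = r := by
  have hgap : ∑ i ∈ s, c i * (r ^ e i - (z ^ e i).re) = 0 := by
    have hre := congrArg Complex.re h
    simp only [Complex.re_sum, Complex.re_ofReal_mul, ← Complex.ofReal_pow, Complex.ofReal_re]
      at hre
    simp [mul_sub, sum_sub_distrib, hre]
  have hgap₀ := (sum_eq_zero_iff_of_nonneg fun i hi => mul_nonneg (hc i hi) (sub_nonneg.2 <|
    (Complex.re_le_norm _).trans <| (norm_pow z _).trans_le <|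
      pow_le_pow_left₀ (norm_nonneg z) hz _)).1 hgap i₀ hi₀
  rw [he₀, pow_one, pow_one, mul_eq_zero, sub_eq_zero] at hgap₀
  have hre : z.re = r := (hgap₀.resolve_left hc₀.ne').symm
  have him : z.im = 0 := Complex.abs_re_eq_norm.1 <|
    le_antisymm (Complex.abs_re_le_norm z) (hz.trans (hre ▸ le_abs_self _))
  exact Complex.ext (by simpa using hre) (by simpa using him)

lemma hsymm3_ne_zero_of_pos {u v : ℝ} (hu : 0 < u) (hv : 0 < v) {z : ℂ} (hz : ‖z‖ ≤ u)
    (m : ℕ) : hsymm3 (u : ℂ) v z m ≠ 0 := by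
  intro h0
  by_cases hzu : z = u
  · have hcast : hsymm3 (u : ℂ) v u m = (hsymm3 u v u m : ℝ) := by simp [hsymm3, hsymm2]
    rw [hzu, hcast, Complex.ofReal_eq_zero] at h0
    exact (hsymm3_pos hu hv hu m).ne' h0
  · refine hzu (eq_of_sum_mul_pow_eq (s := range (m + 1)) (c := fun j => v ^ j)
      (e := fun j => m - j + 1) (fun _ _ => by positivity) (self_mem_range_succ m) (by positivity)
      (by simp) hz ?_)
    have hG := sub_mul_hsymm3 (u : ℂ) v z m
    rw [h0, mul_zero, eq_comm, sub_eq_zero] at hG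
    push_cast
    exact hG

lemma hsymm3_ne_zero {u v : ℝ} (huv : 0 < u * v) {z : ℂ} (hz : ‖z‖ ≤ |u|) (m : ℕ) :
    hsymm3 (u : ℂ) v z m ≠ 0 := by
  rcases mul_pos_iff.1 huv with ⟨hu, hv⟩ | ⟨hu, hv⟩
  · exact hsymm3_ne_zero_of_pos hu hv (hz.trans_eq (abs_of_pos hu)) m
  · have hneg := hsymm3_ne_zero_of_pos (neg_pos.2 hu) (neg_pos.2 hv)
      (z := -z) (by rwa [norm_neg, ← abs_of_neg hu]) m
    rw [Complex.ofReal_neg, Complex.ofReal_neg, ← neg_one_mul, ← neg_one_mul (v : ℂ),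
      ← neg_one_mul z, hsymm3_mul_mul_mul] at hneg
    exact right_ne_zero_of_mul hneg

section PowerSeries

variable {𝕜 : Type*}

lemma summable_norm_and_hasSum_geom_mul [NormedField 𝕜] [CompleteSpace 𝕜] {a : ℕ → 𝕜}
    {A y t : 𝕜} (ha : Summable fun n => ‖a n * t ^ n‖) (hA : HasSum (fun n => a n * t ^ n) A)
    (hy : ‖y * t‖ < 1) :
    (Summable fun n => ‖(∑ k ∈ range (n + 1), y ^ k * a (n - k)) * t ^ n‖) ∧
      HasSum (fun n => (∑ k ∈ range (n + 1), y ^ k * a (n - k)) * t ^ n) ((1 - y * t)⁻¹ * A) := by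
  have hgeom : Summable fun n => ‖(y * t) ^ n‖ := by
    simpa only [norm_pow] using summable_geometric_of_lt_one (norm_nonneg _) hy
  have hterm (n : ℕ) : (∑ k ∈ range (n + 1), y ^ k * a (n - k)) * t ^ n =
      ∑ k ∈ range (n + 1), (y * t) ^ k * (a (n - k) * t ^ (n - k)) := by
    rw [sum_mul]
    refine sum_congr rfl fun k hk => ?_
    rw [mul_pow, ← pow_mul_pow_sub t (Nat.le_of_lt_succ (mem_range.1 hk))]
    ring
  simp only [hterm]
  refine ⟨summable_norm_sum_mul_range_of_summable_norm (g := fun n => a n * t ^ n) hgeom ha, ?_⟩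
  rw [← tsum_geometric_of_norm_lt_one hy, ← hA.tsum_eq]
  exact hasSum_sum_range_mul_of_summable_norm (g := fun n => a n * t ^ n) hgeom ha

lemma eventually_norm_mul_lt_one [NormedField 𝕜] (y : 𝕜) : ∀ᶠ t in 𝓝 0, ‖y * t‖ < 1 :=
  (continuous_norm.comp (continuous_const_mul y)).continuousAt.eventually_lt continuousAt_const
    (by simp)

lemma eventually_hasSum_hsymm3 [NormedField 𝕜] [CompleteSpace 𝕜] (u v z : 𝕜) :
    ∀ᶠ t in 𝓝 0, HasSum (fun m => hsymm3 u v z m * t ^ m)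
      ((1 - u * t)⁻¹ * (1 - v * t)⁻¹ * (1 - z * t)⁻¹) := by
  filter_upwards [eventually_norm_mul_lt_one u, eventually_norm_mul_lt_one v,
    eventually_norm_mul_lt_one z] with t hu hv hz
  have hgeom : Summable fun n => ‖u ^ n * t ^ n‖ := by
    simpa [norm_pow, mul_pow] using summable_geometric_of_lt_one (norm_nonneg _) hu
  have h2 := summable_norm_and_hasSum_geom_mul hgeom
    (by simpa [mul_pow] using hasSum_geometric_of_norm_lt_one hu) hz
  convert (summable_norm_and_hasSum_geom_mul h2.1 h2.2 hv).2 using 1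
  · rfl
  · ring

lemma coeff_eq_of_eventually_hasSum [NontriviallyNormedField 𝕜] {a b : ℕ → 𝕜} {f : 𝕜 → 𝕜}
    (ha : ∀ᶠ t in 𝓝 0, HasSum (fun n => a n * t ^ n) (f t))
    (hb : ∀ᶠ t in 𝓝 0, HasSum (fun n => b n * t ^ n) (f t)) : a = b := by
  have hseries {c : ℕ → 𝕜} (hc : ∀ᶠ t in 𝓝 0, HasSum (fun n => c n * t ^ n) (f t)) :
      HasFPowerSeriesAt f (FormalMultilinearSeries.ofScalars 𝕜 c) 0 :=
    hasFPowerSeriesAt_iff.2 <| by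
      simpa [FormalMultilinearSeries.coeff_ofScalars, mul_comm] using hc
  exact FormalMultilinearSeries.ofScalars_series_injective 𝕜 𝕜
    ((hseries ha).eq_formalMultilinearSeries (hseries hb))

end PowerSeries

theorem stmt_16_general (a b c : ℝ)
    (hac : 0 < a * c)
    (α : ℝ) (hα : a * α ^ 2 + b * α + c = 0)
    (P : ℕ → ℂ → ℂ)
    (hP : ∀ z : ℂ, ∃ ε > 0, ∀ t : ℂ, ‖t‖ < ε →
      HasSum (fun m => P m z * t ^ m)
        ((((a : ℂ) * t ^ 2 + (b : ℂ) * t + (c : ℂ)) * (1 - t * z))⁻¹)) :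
    ∀ m : ℕ, ∀ z : ℂ, P m z = 0 → 1 / |α| < ‖z‖ := by
  intro m z hPz
  have hc : c ≠ 0 := right_ne_zero_of_mul hac.ne'
  have hα0 : α ≠ 0 := by
    rintro rfl
    exact hc (by simpa using hα)
  have huv : 0 < α⁻¹ * (a * α / c) := by
    rw [show α⁻¹ * (a * α / c) = a * c / c ^ 2 by field_simp]
    positivity
  have hcoeff :
      (P · z) = fun k => (c : ℂ)⁻¹ * hsymm3 ((α⁻¹ : ℝ) : ℂ) ((a * α / c : ℝ) : ℂ) z k := by
    obtain ⟨ε, hε, hPz⟩ := hP z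
    refine coeff_eq_of_eventually_hasSum
      (Metric.eventually_nhds_iff.2 ⟨ε, hε, fun t ht => hPz t (by simpa using ht)⟩) ?_
    filter_upwards [eventually_hasSum_hsymm3 ((α⁻¹ : ℝ) : ℂ) ((a * α / c : ℝ) : ℂ) z] with t ht
    have hαC : (a : ℂ) * α ^ 2 + b * α + c = 0 := by exact_mod_cast hα
    rw [quadratic_eq_mul_one_sub_mul_one_sub (by exact_mod_cast hc) (by exact_mod_cast hα0) hαC,
      mul_comm t z]
    push_cast at ht ⊢
    simpa only [mul_inv, mul_assoc] using ht.mul_left (c : ℂ)⁻¹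
  by_contra! hle
  refine hsymm3_ne_zero huv (by rwa [abs_inv, ← one_div]) m ?_
  simpa [hPz, hc] using (congrFun hcoeff m).symm

/-- If `a, b, c ≠ 0`, `ac > 0`, `b² - 4ac > 0`, `{P_m}` is generated by
`1/((at²+bt+c)(1-tz))`, and `α` is the root of `at²+bt+c` of smaller modulus,
then no zero of `P_m` lies in the closed disk of radius `1/|α|`. -/
theorem stmt_16 (a b c : ℝ) (ha : a ≠ 0) (hb : b ≠ 0) (hc : c ≠ 0)
    (hac : 0 < a * c) (hd : 0 < b ^ 2 - 4 * a * c)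
    (α : ℝ) (hα : a * α ^ 2 + b * α + c = 0)
    (hmin : ∀ β : ℝ, a * β ^ 2 + b * β + c = 0 → |α| ≤ |β|)
    (P : ℕ → ℂ → ℂ)
    (hP : ∀ z : ℂ, ∃ ε > 0, ∀ t : ℂ, ‖t‖ < ε →
      HasSum (fun m => P m z * t ^ m)
        ((((a : ℂ) * t ^ 2 + (b : ℂ) * t + (c : ℂ)) * (1 - t * z))⁻¹)) :
    ∀ m : ℕ, ∀ z : ℂ, P m z = 0 → 1 / |α| < ‖z‖ :=
  stmt_16_general a b c hac α hα P hP
end
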